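/- In the steepest descent algorithm on a finite M-convex set B with separable discretely convex objective f: starting from any x^(0) ∈ B and moving at each step to a strictly better point of the form x^(k) − e_u + e_v ∈ B (if one exists), the algorithm terminates at a global minimizer of f over B after at most (1/2)·‖x^(0) − x*‖_1 steps for some minimizer x*, where ‖·‖_1 is the ℓ1 norm. -/

import Mathlib

/-!
The exchange axiom is assumed only in its one-sided form; by induction on the ℓ¹ distance it
upgrades to the two-sided form, in which `x - e_u + e_v ∈ B` and `y + e_u - e_v ∈ B` for one and
the same `v`. For a separable convex `F` the two exchanged points satisfy
`F (x - e_u + e_v) + F (y + e_u - e_v) ≤ F x + F y`. Hence a point admitting no improving exchange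
is a global minimizer, and, applying the inequality to a minimizer `m` nearest to `x`, a best
exchange step `x → x'` brings `x'` within `‖x - m‖₁ - 2` of some minimizer. So the ℓ¹ distance
from the iterate to the set of minimizers drops by 2 per step until a minimizer `x*` is reached,
where the iteration stays; in particular it takes at most `‖x⁰ - x*‖₁ / 2` steps.
-/

open Finset

namespace MConvex

variable {ι : Type*}

lemma monotone_sub_of_discrete_convex {g : ℤ → ℝ} (hg : ∀ t, 2 * g t ≤ g (t - 1) + g (t + 1)) :
    Monotone fun t => g (t + 1) - g t :=
  monotone_int_of_le_succ fun t => by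
    have := hg (t + 1)
    simp only [add_sub_cancel_right] at this
    linarith

section Fintype

variable [Fintype ι] {x y : ι → ℤ}

def l1Dist (x y : ι → ℤ) : ℕ := ∑ j, (x j - y j).natAbs

def separableSum (f : ι → ℤ → ℝ) (x : ι → ℤ) : ℝ := ∑ j, f j (x j)

lemma l1Dist_comm (x y : ι → ℤ) : l1Dist x y = l1Dist y x := by
  simp only [l1Dist, ← Int.natAbs_neg (x _ - y _), neg_sub]

lemma natCast_l1Dist (x y : ι → ℤ) : (l1Dist x y : ℤ) = ∑ j, |x j - y j| := by
  simp [l1Dist]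

@[simp]
lemma l1Dist_eq_zero : l1Dist x y = 0 ↔ x = y := by
  simp [l1Dist, funext_iff, sub_eq_zero]

@[simp]
lemma l1Dist_self (x : ι → ℤ) : l1Dist x x = 0 :=
  l1Dist_eq_zero.2 rfl

end Fintype

variable [DecidableEq ι]

def exch (x : ι → ℤ) (u v : ι) : ι → ℤ := x - Pi.single u 1 + Pi.single v 1

section Exch

variable {x : ι → ℤ} {u v j : ι}

lemma exch_apply (x : ι → ℤ) (u v j : ι) :
    exch x u v j = x j - (if j = u then 1 else 0) + (if j = v then 1 else 0) := by
  simp [exch, Pi.single_apply]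

lemma exch_apply_left (huv : u ≠ v) : exch x u v u = x u - 1 := by
  simp [exch_apply, huv]

lemma exch_apply_right (huv : u ≠ v) : exch x u v v = x v + 1 := by
  simp [exch_apply, huv.symm]

lemma exch_apply_of_ne (hju : j ≠ u) (hjv : j ≠ v) : exch x u v j = x j := by
  simp [exch_apply, hju, hjv]

@[simp]
lemma exch_self (x : ι → ℤ) (u : ι) : exch x u u = x := by
  simp [exch]

@[simp]
lemma exch_exch_swap (x : ι → ℤ) (u v : ι) : exch (exch x u v) v u = x := by
  simp only [exch]; abel

lemma exch_exch_of_left (x : ι → ℤ) (u v w : ι) : exch (exch x u v) v w = exch x u w := by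
  simp only [exch]; abel

lemma exch_exch_of_right (x : ι → ℤ) (u v w : ι) : exch (exch x u v) w u = exch x w v := by
  simp only [exch]; abel

end Exch

/-- The exchange axiom in its weak, one-sided form; the two-sided form is
`IsMConvex.exists_strong_exch`. -/
def IsMConvex (B : Set (ι → ℤ)) : Prop :=
  ∀ x ∈ B, ∀ y ∈ B, ∀ u, y u < x u → ∃ v, x v < y v ∧ exch x u v ∈ B

namespace IsMConvex

variable {B : Set (ι → ℤ)} {x y : ι → ℤ} {u : ι}

lemma exists_lt_of_ne (hB : IsMConvex B) (hx : x ∈ B) (hy : y ∈ B) (hne : x ≠ y) :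
    ∃ u, y u < x u := by
  by_contra! hle
  obtain ⟨j, hj⟩ := Function.ne_iff.1 hne
  obtain ⟨w, hw, -⟩ := hB y hy x hx j (lt_of_le_of_ne (hle j) hj)
  exact (hle w).not_gt hw

end IsMConvex

variable [Fintype ι]

section ExchDistance

variable {x y : ι → ℤ} {u v : ι}

lemma sum_apply_exch_add {M : Type*} [AddCommMonoid M] (φ : ι → ℤ → M)
    (x : ι → ℤ) (huv : u ≠ v) :
    ∑ j, φ j (exch x u v j) + φ u (x u) + φ v (x v) =
      ∑ j, φ j (x j) + φ u (x u - 1) + φ v (x v + 1) := by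
  have hv : v ∈ univ.erase u := mem_erase.2 ⟨huv.symm, mem_univ v⟩
  have hrest : ∑ j ∈ (univ.erase u).erase v, φ j (exch x u v j) =
      ∑ j ∈ (univ.erase u).erase v, φ j (x j) := by
    refine sum_congr rfl fun j hj => ?_
    obtain ⟨hjv, hju⟩ : j ≠ v ∧ j ≠ u := by simp_all
    rw [exch_apply_of_ne hju hjv]
  simp only [← add_sum_erase _ _ (mem_univ u), ← add_sum_erase _ _ hv, hrest,
    exch_apply_left huv, exch_apply_right huv]
  abel

lemma l1Dist_exch (huv : u ≠ v) :
    l1Dist (exch x u v) y + (x u - y u).natAbs + (x v - y v).natAbs =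
      l1Dist x y + (x u - 1 - y u).natAbs + (x v + 1 - y v).natAbs :=
  sum_apply_exch_add (fun j t => (t - y j).natAbs) x huv

lemma l1Dist_exch_add_two (hu : y u < x u) (hv : x v < y v) :
    l1Dist (exch x u v) y + 2 = l1Dist x y := by
  have := l1Dist_exch (x := x) (y := y) (show u ≠ v by rintro rfl; omega)
  omega

lemma l1Dist_exch_le (x y : ι → ℤ) (u v : ι) : l1Dist (exch x u v) y ≤ l1Dist x y + 2 := by
  obtain rfl | huv := eq_or_ne u v
  · simp
  · have := l1Dist_exch (x := x) (y := y) huv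
    omega

lemma exch_eq_of_l1Dist_le_two (hd : l1Dist x y ≤ 2) (hu : y u < x u) (hv : x v < y v) :
    exch x u v = y := by
  have := l1Dist_exch_add_two hu hv
  exact l1Dist_eq_zero.1 (by omega)

end ExchDistance

namespace IsMConvex

variable {B : Set (ι → ℤ)} {x y : ι → ℤ} {u : ι}

lemma exists_strong_exch_of_l1Dist_le_four (hB : IsMConvex B) (hx : x ∈ B) (hy : y ∈ B)
    (hd : l1Dist x y ≤ 4) (hu : y u < x u) :
    ∃ v, x v < y v ∧ exch x u v ∈ B ∧ exch y v u ∈ B := by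
  by_contra! hfail
  obtain ⟨v, hv, hxv⟩ := hB x hx y hy u hu
  obtain ⟨t, ht, hyt⟩ := hB y hy x hx v hv
  have htu : t ≠ u := by rintro rfl; exact hfail v hv hxv hyt
  have huv : u ≠ v := by rintro rfl; omega
  have hwu : exch y v t u < x u := by rwa [exch_apply_of_ne huv htu.symm]
  have hwx : l1Dist x (exch y v t) ≤ 2 := by
    have := l1Dist_exch_add_two hv ht
    rw [l1Dist_comm y] at this
    rw [l1Dist_comm]
    omega
  obtain ⟨c, hc⟩ := hB.exists_lt_of_ne hyt hx (by rintro h; rw [h] at hwu; omega)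
  have hxw : exch x u c = exch y v t := exch_eq_of_l1Dist_le_two hwx hwu hc
  have hcy : x c < y c := by
    rw [exch_apply] at hc
    split_ifs at hc <;> subst_vars <;> omega
  have hyc : exch y c u ∉ B := hfail c hcy (hxw ▸ hyt)
  -- Now `x = y - e_v - e_c + e_u + e_t`, so an exchange of `x` at `t` towards `y` can only give
  -- `exch y c u` or `exch y v u`.
  obtain ⟨s, hs, hxs⟩ := hB x hx y hy t ht
  by_cases hsv : s = v
  · subst hsv
    have hid : exch x t s = exch y c u := by simp only [exch] at hxw ⊢; linear_combination hxw
    exact hyc (hid ▸ hxs)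
  by_cases hsc : s = c
  · subst hsc
    have hid : exch x t s = exch y v u := by simp only [exch] at hxw ⊢; linear_combination hxw
    exact hfail v hv hxv (hid ▸ hxs)
  have hxys := congrFun hxw s
  rw [exch_apply_of_ne (by rintro rfl; omega) hsc, exch_apply_of_ne hsv (by rintro rfl; omega)]
    at hxys
  omega

lemma exch_mem_of_minimal_counterexample (hx : x ∈ B) (hy : y ∈ B) (hu : y u < x u)
    (hd : 5 ≤ l1Dist x y)
    (IH : ∀ x' ∈ B, ∀ y' ∈ B, l1Dist x' y' < l1Dist x y → ∀ u', y' u' < x' u' →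
      ∃ v, x' v < y' v ∧ exch x' u' v ∈ B ∧ exch y' v u' ∈ B)
    (hfail : ∀ v, x v < y v → exch x u v ∈ B → exch y v u ∉ B)
    {a b : ι} (ha : y a < x a) (hb : x b < y b) (hr : exch y b a ∈ B)
    (hru : exch y b a u < x u) :
    exch y b u ∈ B ∧ ∃ w, x w < y w ∧ exch x u w ∈ B ∧ exch y w a ∈ B := by
  have hxr : l1Dist x (exch y b a) + 2 = l1Dist x y := by
    rw [l1Dist_comm, l1Dist_exch_add_two hb ha, l1Dist_comm]
  obtain ⟨w, hw, hxw, hs⟩ := IH x hx _ hr (by omega) u hru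
  have hwy : x w < y w := by
    rw [exch_apply] at hw; split_ifs at hw <;> subst_vars <;> omega
  have hsy : l1Dist (exch (exch y b a) w u) y ≤ 4 := by
    have h1 := l1Dist_exch_le (exch y b a) y w u
    have h2 := l1Dist_exch_le y y b a
    rw [l1Dist_self] at h2
    omega
  have hsu : y u < exch (exch y b a) w u u := by
    simp only [exch_apply]; split_ifs <;> subst_vars <;> omega
  obtain ⟨v, hv, hsv, hyv⟩ := IH _ hs y hy (by omega) u hsu
  obtain rfl | rfl : v = b ∨ v = w := by
    by_contra! h
    rw [exch_apply, exch_apply, if_neg h.1, if_neg h.2] at hv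
    split_ifs at hv <;> subst_vars <;> omega
  · have hid : exch (exch (exch y v a) w u) u v = exch y w a := by simp only [exch]; abel
    exact ⟨hyv, w, hwy, hxw, hid ▸ hsv⟩
  · exact absurd hyv (hfail v hwy hxw)

theorem exists_strong_exch (hB : IsMConvex B) (hx : x ∈ B) (hy : y ∈ B) (hu : y u < x u) :
    ∃ v, x v < y v ∧ exch x u v ∈ B ∧ exch y v u ∈ B := by
  induction hn : l1Dist x y using Nat.strong_induction_on generalizing x y u with
  | _ n IH =>
  subst hn
  have IH' : ∀ x' ∈ B, ∀ y' ∈ B, l1Dist x' y' < l1Dist x y → ∀ u', y' u' < x' u' →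
      ∃ v, x' v < y' v ∧ exch x' u' v ∈ B ∧ exch y' v u' ∈ B :=
    fun x' hx' y' hy' hlt u' hu' => IH _ hlt hx' hy' hu' rfl
  rcases le_or_gt (l1Dist x y) 4 with hd | hd
  · exact hB.exists_strong_exch_of_l1Dist_le_four hx hy hd hu
  by_contra! hfail
  obtain ⟨v₁, hv₁, hx₁⟩ := hB x hx y hy u hu
  have hd₁ := l1Dist_exch_add_two hu hv₁
  have hx₁y : exch x u v₁ ≠ y := by rintro h; rw [h, l1Dist_self] at hd₁; omega
  obtain ⟨u₁, hu₁⟩ := hB.exists_lt_of_ne hx₁ hy hx₁y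
  obtain ⟨v₂, hv₂, -, hz⟩ := IH' _ hx₁ y hy (by omega) u₁ hu₁
  have hu₁x : y u₁ < x u₁ := by
    rw [exch_apply] at hu₁; split_ifs at hu₁ <;> subst_vars <;> omega
  have hv₂x : x v₂ < y v₂ := by
    rw [exch_apply] at hv₂; split_ifs at hv₂ <;> subst_vars <;> omega
  have hbu : ∀ b, x b < y b → exch y b u₁ u < x u := fun b hb => by
    rw [exch_apply] at hu₁ ⊢
    split_ifs at hu₁ ⊢ <;> subst_vars <;> first | omega | contradiction
  -- The first round replaces `v₂` by some `w` exchangeable from `x`; the second then puts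
  -- `exch y w u` in `B`, contradicting `hfail`.
  obtain ⟨-, w, hw, hxw, hr⟩ :=
    exch_mem_of_minimal_counterexample hx hy hu (by omega) IH' hfail hu₁x hv₂x hz (hbu v₂ hv₂x)
  obtain ⟨hyw, -⟩ :=
    exch_mem_of_minimal_counterexample hx hy hu (by omega) IH' hfail hu₁x hw hr (hbu w hw)
  exact hfail w hw hxw hyw

end IsMConvex

section Separable

variable {B : Set (ι → ℤ)} {f : ι → ℤ → ℝ} {x y m : ι → ℤ} {u v : ι}

lemma separableSum_exch_add_exch_le (hf : ∀ j t, 2 * f j t ≤ f j (t - 1) + f j (t + 1))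
    (hu : y u < x u) (hv : x v < y v) :
    separableSum f (exch x u v) + separableSum f (exch y v u) ≤
      separableSum f x + separableSum f y := by
  have huv : u ≠ v := by rintro rfl; omega
  have hx := sum_apply_exch_add f x huv
  have hy := sum_apply_exch_add f y huv.symm
  have hsu := monotone_sub_of_discrete_convex (hf u) (show y u ≤ x u - 1 by omega)
  have hsv := monotone_sub_of_discrete_convex (hf v) (show x v ≤ y v - 1 by omega)
  simp only [sub_add_cancel] at hsu hsv
  simp only [separableSum]
  linarith

theorem IsMConvex.le_separableSum_of_forall_exch (hB : IsMConvex B)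
    (hf : ∀ j t, 2 * f j t ≤ f j (t - 1) + f j (t + 1)) (hx : x ∈ B)
    (hloc : ∀ u v, exch x u v ∈ B → separableSum f x ≤ separableSum f (exch x u v))
    (hy : y ∈ B) : separableSum f x ≤ separableSum f y := by
  induction hn : l1Dist x y using Nat.strong_induction_on generalizing y with
  | _ n IH =>
  subst hn
  obtain rfl | hne := eq_or_ne x y
  · rfl
  obtain ⟨u, hu⟩ := hB.exists_lt_of_ne hx hy hne
  obtain ⟨v, hv, hxv, hyv⟩ := hB.exists_strong_exch hx hy hu
  have hd : l1Dist x (exch y v u) + 2 = l1Dist x y := by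
    rw [l1Dist_comm, l1Dist_exch_add_two hv hu, l1Dist_comm]
  have := IH _ (by omega) hyv rfl
  have := separableSum_exch_add_exch_le hf hu hv
  have := hloc u v hxv
  linarith

lemma IsMConvex.exists_minimizer_l1Dist_exch_add_two_le_of_lt (hB : IsMConvex B)
    (hf : ∀ j t, 2 * f j t ≤ f j (t - 1) + f j (t + 1)) (huv : u ≠ v) (hxuv : exch x u v ∈ B)
    (hbest : ∀ p q, exch x p q ∈ B → separableSum f (exch x u v) ≤ separableSum f (exch x p q))
    (hm : m ∈ B) (hmin : IsMinOn (separableSum f) B m)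
    (hnear : ∀ z ∈ B, IsMinOn (separableSum f) B z → l1Dist x m ≤ l1Dist x z)
    (hmu : m u < x u) :
    ∃ z ∈ B, IsMinOn (separableSum f) B z ∧ l1Dist (exch x u v) z + 2 ≤ l1Dist x m := by
  rcases lt_or_ge (x v) (m v) with hv | hv
  · exact ⟨m, hm, hmin, (l1Dist_exch_add_two hmu hv).le⟩
  have hmv : m v < exch x u v v := by rw [exch_apply_right huv]; omega
  obtain ⟨w, hw, hxw, hmw⟩ := hB.exists_strong_exch hxuv hm hmv
  have hwu : w ≠ u := by rintro rfl; rw [exch_apply_left huv] at hw; omega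
  have hwv : w ≠ v := by rintro rfl; rw [exch_apply_right huv] at hw; omega
  have hxmw : x w < m w := by rwa [exch_apply_of_ne hwu hwv] at hw
  have hzmin : IsMinOn (separableSum f) B (exch m w v) := by
    have h4 := separableSum_exch_add_exch_le hf hmv hw
    rw [exch_exch_of_left] at h4 hxw
    have := hbest u w hxw
    refine isMinOn_iff.2 fun y hy => ?_
    have := isMinOn_iff.1 hmin y hy
    linarith
  have hnz := hnear _ hmw hzmin
  have hdz := l1Dist_exch (x := m) (y := x) hwv
  rw [l1Dist_comm x m, l1Dist_comm x (exch m w v)] at hnz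
  obtain ⟨hmxv, hsame⟩ : m v = x v ∧ l1Dist (exch m w v) x = l1Dist m x := by omega
  have hdx := l1Dist_exch_add_two (x := x) (y := exch m w v) (u := u) (v := v)
    (by rwa [exch_apply_of_ne hwu.symm huv]) (by rw [exch_apply_right hwv]; omega)
  refine ⟨_, hmw, hzmin, ?_⟩
  rw [l1Dist_comm x m, ← hsame, ← l1Dist_comm x, ← hdx]

lemma IsMConvex.exists_minimizer_l1Dist_exch_add_two_le_of_nearest (hB : IsMConvex B)
    (hf : ∀ j t, 2 * f j t ≤ f j (t - 1) + f j (t + 1)) (hxuv : exch x u v ∈ B)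
    (hlt : separableSum f (exch x u v) < separableSum f x)
    (hbest : ∀ p q, exch x p q ∈ B → separableSum f (exch x u v) ≤ separableSum f (exch x p q))
    (hm : m ∈ B) (hmin : IsMinOn (separableSum f) B m)
    (hnear : ∀ z ∈ B, IsMinOn (separableSum f) B z → l1Dist x m ≤ l1Dist x z) :
    ∃ z ∈ B, IsMinOn (separableSum f) B z ∧ l1Dist (exch x u v) z + 2 ≤ l1Dist x m := by
  have huv : u ≠ v := by rintro rfl; simp at hlt
  rcases lt_or_ge (m u) (x u) with hmu | hmu
  · exact hB.exists_minimizer_l1Dist_exch_add_two_le_of_lt hf huv hxuv hbest hm hmin hnear hmu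
  have hxu : exch x u v u < m u := by rw [exch_apply_left huv]; omega
  obtain ⟨w, hw, hmw, hxw⟩ := hB.exists_strong_exch hm hxuv hxu
  have h4 := separableSum_exch_add_exch_le hf hxu hw
  obtain rfl | hwv := eq_or_ne w v
  · rw [exch_exch_swap] at h4
    have := isMinOn_iff.1 hmin _ hmw
    linarith
  have hwu : w ≠ u := by rintro rfl; rw [exch_apply_left huv] at hw; omega
  have hmxw : m w < x w := by rwa [exch_apply_of_ne hwu hwv] at hw
  rw [exch_exch_of_right] at hxw h4
  have hzmin : IsMinOn (separableSum f) B (exch m u w) := by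
    have := hbest w v hxw
    refine isMinOn_iff.2 fun y hy => ?_
    have := isMinOn_iff.1 hmin y hy
    linarith
  have hnz := hnear _ hmw hzmin
  have hdz := l1Dist_exch (x := m) (y := x) hwu.symm
  rw [l1Dist_comm x m, l1Dist_comm x (exch m u w)] at hnz
  obtain ⟨hmxu, hsame⟩ : m u = x u ∧ l1Dist (exch m u w) x = l1Dist m x := by omega
  rw [l1Dist_comm x m, ← hsame, ← l1Dist_comm x]
  refine hB.exists_minimizer_l1Dist_exch_add_two_le_of_lt hf huv hxuv hbest hmw hzmin
    (fun z hz hzmin => ?_) (by rw [exch_apply_left hwu.symm]; omega)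
  rw [l1Dist_comm x, hsame, l1Dist_comm]
  exact hnear z hz hzmin

theorem IsMConvex.exists_minimizer_l1Dist_exch_add_two_le (hB : IsMConvex B)
    (hf : ∀ j t, 2 * f j t ≤ f j (t - 1) + f j (t + 1)) (hxuv : exch x u v ∈ B)
    (hlt : separableSum f (exch x u v) < separableSum f x)
    (hbest : ∀ p q, exch x p q ∈ B → separableSum f (exch x u v) ≤ separableSum f (exch x p q))
    (hm : m ∈ B) (hmin : IsMinOn (separableSum f) B m) :
    ∃ z ∈ B, IsMinOn (separableSum f) B z ∧ l1Dist (exch x u v) z + 2 ≤ l1Dist x m := by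
  let S : Set (ι → ℤ) := {z | z ∈ B ∧ IsMinOn (separableSum f) B z}
  obtain ⟨m₀, ⟨hm₀, hmin₀⟩, hnear⟩ : ∃ m₀ ∈ S, ∀ z ∈ S, l1Dist x m₀ ≤ l1Dist x z :=
    ⟨_, Function.argminOn_mem _ S ⟨m, hm, hmin⟩, fun z hz => Function.argminOn_le _ S hz⟩
  obtain ⟨z, hz, hzmin, hd⟩ := hB.exists_minimizer_l1Dist_exch_add_two_le_of_nearest hf hxuv hlt
    hbest hm₀ hmin₀ fun z hz hzmin => hnear z ⟨hz, hzmin⟩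
  exact ⟨z, hz, hzmin, hd.trans (hnear m ⟨hm, hmin⟩)⟩

end Separable

lemma exists_two_mul_le_of_forall_step {α : Type*} {P : α → Prop} {D : α → α → ℕ} {s : ℕ → α}
    (hstep : ∀ k z, ¬ P (s k) → P z → ∃ z', P z' ∧ D (s (k + 1)) z' + 2 ≤ D (s k) z)
    {z : α} (hz : P z) : ∃ N, P (s N) ∧ 2 * N ≤ D (s 0) z := by
  induction hn : D (s 0) z using Nat.strong_induction_on generalizing s z with
  | _ n IH =>
  by_cases h0 : P (s 0)
  · exact ⟨0, h0, by simp⟩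
  obtain ⟨z', hz', hd⟩ := hstep 0 z h0 hz
  obtain ⟨N, hN, hle⟩ :=
    IH _ (by omega) (s := fun k => s (k + 1)) (fun k => hstep (k + 1)) hz' rfl
  exact ⟨N + 1, hN, by omega⟩

end MConvex

open MConvex in
theorem steepest_descent_terminates_general {K : ℕ}
    (B : Finset (Fin K → ℤ))
    (hex : ∀ x ∈ B, ∀ y ∈ B, ∀ u : Fin K, y u < x u →
      ∃ v : Fin K, x v < y v ∧ x - Pi.single u 1 + Pi.single v 1 ∈ B)
    (f : Fin K → ℤ → ℝ)
    (hconv : ∀ j : Fin K, ∀ t : ℤ, 2 * f j t ≤ f j (t - 1) + f j (t + 1))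
    (F : (Fin K → ℤ) → ℝ) (hF : ∀ x, F x = ∑ j, f j (x j))
    (seq : ℕ → (Fin K → ℤ)) (hmem : ∀ k, seq k ∈ B)
    -- if an improving exchange exists, the algorithm moves to a best exchange
    (hstep : ∀ k,
      (∃ u v : Fin K, seq k - Pi.single u 1 + Pi.single v 1 ∈ B ∧
          F (seq k - Pi.single u 1 + Pi.single v 1) < F (seq k)) →
        (∃ u v : Fin K, seq (k+1) = seq k - Pi.single u 1 + Pi.single v 1) ∧
        F (seq (k+1)) < F (seq k) ∧
        (∀ u v : Fin K, seq k - Pi.single u 1 + Pi.single v 1 ∈ B →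
          F (seq (k+1)) ≤ F (seq k - Pi.single u 1 + Pi.single v 1)))
    -- otherwise it stops
    (hstop : ∀ k,
      (¬ ∃ u v : Fin K, seq k - Pi.single u 1 + Pi.single v 1 ∈ B ∧
          F (seq k - Pi.single u 1 + Pi.single v 1) < F (seq k)) →
        seq (k+1) = seq k) :
    ∃ xstar ∈ B, (∀ y ∈ B, F xstar ≤ F y) ∧
      ∃ N : ℕ, 2 * (N : ℤ) ≤ ∑ j, |seq 0 j - xstar j| ∧
        ∀ m, N ≤ m → seq m = xstar := by
  classical
  obtain rfl : F = separableSum f := funext hF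
  have hB : IsMConvex (B : Set (Fin K → ℤ)) := hex
  let P (z : Fin K → ℤ) : Prop := z ∈ B ∧ IsMinOn (separableSum f) B z
  have hdesc (k : ℕ) (z : Fin K → ℤ) (hk : ¬ P (seq k)) (hz : P z) :
      ∃ z', P z' ∧ l1Dist (seq (k + 1)) z' + 2 ≤ l1Dist (seq k) z := by
    have himp : ∃ u v, exch (seq k) u v ∈ B ∧
        separableSum f (exch (seq k) u v) < separableSum f (seq k) := by
      by_contra! hloc
      exact hk ⟨hmem k, isMinOn_iff.2 fun y hy =>
        hB.le_separableSum_of_forall_exch hconv (hmem k) hloc hy⟩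
    obtain ⟨⟨u, v, hk1⟩, hlt, hbest⟩ := hstep k himp
    have hxuv : exch (seq k) u v ∈ B := by rw [exch, ← hk1]; exact hmem (k + 1)
    rw [hk1] at hlt hbest ⊢
    obtain ⟨z', hz', hz'min, hd⟩ :=
      hB.exists_minimizer_l1Dist_exch_add_two_le hconv hxuv hlt hbest hz.1 hz.2
    exact ⟨z', ⟨hz', hz'min⟩, hd⟩
  obtain ⟨m, hm, hmin⟩ := B.exists_min_image (separableSum f) ⟨_, hmem 0⟩
  have hreach : ∃ N, P (seq N) :=
    (exists_two_mul_le_of_forall_step hdesc ⟨hm, isMinOn_iff.2 hmin⟩).imp fun _ h => h.1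
  obtain ⟨hN, hNmin⟩ := Nat.find_spec hreach
  refine ⟨_, hN, isMinOn_iff.1 hNmin, Nat.find hreach, ?_, fun n hn => ?_⟩
  · obtain ⟨N', hN', hle⟩ := exists_two_mul_le_of_forall_step hdesc (Nat.find_spec hreach)
    have := Nat.find_min' hreach hN'
    rw [← natCast_l1Dist]
    omega
  · induction n, hn using Nat.le_induction with
    | base => rfl
    | succ n _ ih =>
      rw [← ih] at hNmin ⊢
      exact hstop n fun ⟨u, v, huv, hlt⟩ => (isMinOn_iff.1 hNmin _ huv).not_gt hlt

/-- Steepest descent on a finite M-convex set with a separable discretely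
convex objective terminates at a global minimizer after at most
`(1/2)·‖x⁽⁰⁾ − x*‖₁` steps for some minimizer `x*`. -/
theorem steepest_descent_terminates {K : ℕ} (hK : 0 < K)
    (B : Finset (Fin K → ℤ)) (hne : B.Nonempty)
    (hex : ∀ x ∈ B, ∀ y ∈ B, ∀ u : Fin K, y u < x u →
      ∃ v : Fin K, x v < y v ∧ x - Pi.single u 1 + Pi.single v 1 ∈ B)
    (f : Fin K → ℤ → ℝ)
    (hconv : ∀ j : Fin K, ∀ t : ℤ, 2 * f j t ≤ f j (t - 1) + f j (t + 1))
    (F : (Fin K → ℤ) → ℝ) (hF : ∀ x, F x = ∑ j, f j (x j))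
    (seq : ℕ → (Fin K → ℤ)) (hmem : ∀ k, seq k ∈ B)
    -- if an improving exchange exists, the algorithm moves to a best exchange
    (hstep : ∀ k,
      (∃ u v : Fin K, seq k - Pi.single u 1 + Pi.single v 1 ∈ B ∧
          F (seq k - Pi.single u 1 + Pi.single v 1) < F (seq k)) →
        (∃ u v : Fin K, seq (k+1) = seq k - Pi.single u 1 + Pi.single v 1) ∧
        F (seq (k+1)) < F (seq k) ∧
        (∀ u v : Fin K, seq k - Pi.single u 1 + Pi.single v 1 ∈ B →
          F (seq (k+1)) ≤ F (seq k - Pi.single u 1 + Pi.single v 1)))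
    -- otherwise it stops
    (hstop : ∀ k,
      (¬ ∃ u v : Fin K, seq k - Pi.single u 1 + Pi.single v 1 ∈ B ∧
          F (seq k - Pi.single u 1 + Pi.single v 1) < F (seq k)) →
        seq (k+1) = seq k) :
    ∃ xstar ∈ B, (∀ y ∈ B, F xstar ≤ F y) ∧
      ∃ N : ℕ, 2 * (N : ℤ) ≤ ∑ j, |seq 0 j - xstar j| ∧
        ∀ m, N ≤ m → seq m = xstar :=
  steepest_descent_terminates_general B hex f hconv F hF seq hmem hstep hstop
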